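/- Let f: Z_N^d → C be nonzero with f̂ supported in Σ, and suppose a (p,q)-restriction estimate holds for Σ with constant C: (|Σ|^{-1} Σ_{m ∈ Σ} |ĝ(m)|^q)^{1/q} ≤ C·N^{-d}·(Σ_x |g(x)|^p)^{1/p} for all g: Z_N^d → C. Suppose also A_1 ⊂ Z_N^d satisfies Σ_{x ∈ Z_N^d} |f(x)|^p ≤ γ · Σ_{x ∈ A_1} |f(x)|^p. Then |A_1|^{1/p}·|Σ| ≥ N^d/(C·γ^{1/p}). -/

import Mathlib

open Finset

noncomputable def ft {N d : ℕ} [NeZero N] (f : (Fin d → ZMod N) → ℂ) (m : Fin d → ZMod N) : ℂ :=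
  ((N : ℂ) ^ d)⁻¹ * ∑ x : Fin d → ZMod N,
    Complex.exp (-(2 * Real.pi * Complex.I * ((∑ i, x i * m i).val : ℂ) / N)) * f x

noncomputable def ch {N d : ℕ} (x m : Fin d → ZMod N) : ℂ :=
  Complex.exp (2 * Real.pi * Complex.I * ((∑ i, x i * m i).val : ℂ) / N)

lemma my_hpos {N : ℕ} [NeZero N] (s : ZMod N) :
    Complex.exp (2 * Real.pi * Complex.I * (s.val : ℂ) / N) = ZMod.stdAddChar s := by
  rw [ZMod.stdAddChar_apply, ZMod.toCircle_apply]

lemma my_hneg {N : ℕ} [NeZero N] (s : ZMod N) :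
    Complex.exp (-(2 * Real.pi * Complex.I * (s.val : ℂ) / N)) = ZMod.stdAddChar (-s) := by
  have h := ZMod.stdAddChar_coe (N := N) (-(s.val : ℤ))
  rw [show ((-(s.val : ℤ) : ℤ) : ZMod N) = -s by push_cast [ZMod.natCast_zmod_val]; ring] at h
  rw [h]
  congr 1
  push_cast
  ring

lemma my_map_sum {N : ℕ} [NeZero N] {ι : Type*} (s : Finset ι) (g : ι → ZMod N) :
    (ZMod.stdAddChar (∑ i ∈ s, g i) : ℂ) = ∏ i ∈ s, (ZMod.stdAddChar (g i) : ℂ) := by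
  induction s using Finset.cons_induction with
  | empty => simp
  | cons a s ha ih => rw [Finset.sum_cons, Finset.prod_cons, AddChar.map_add_eq_mul, ih]

lemma my_orth {N d : ℕ} [NeZero N] (c : Fin d → ZMod N) :
    ∑ m : Fin d → ZMod N, (ZMod.stdAddChar (∑ i, c i * m i) : ℂ)
      = if c = 0 then ((N : ℂ) ^ d) else 0 := by
  have h1 (t : ZMod N) : ∑ i : ZMod N, (ZMod.stdAddChar (t * i) : ℂ)
      = if t = 0 then (N : ℂ) else 0 := by
    split_ifs with h
    · simp [h, ZMod.card]
    · exact AddChar.sum_eq_zero_of_ne_one (ZMod.isPrimitive_stdAddChar N h)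
  calc ∑ m : Fin d → ZMod N, (ZMod.stdAddChar (∑ i, c i * m i) : ℂ)
      = ∑ m : Fin d → ZMod N, ∏ i, (ZMod.stdAddChar (c i * m i) : ℂ) := by
        exact Finset.sum_congr rfl fun m _ ↦ my_map_sum _ _
    _ = ∏ i, ∑ t : ZMod N, (ZMod.stdAddChar (c i * t) : ℂ) := by
        rw [Finset.prod_univ_sum, ← Fintype.piFinset_univ]
    _ = ∏ i, (if c i = 0 then (N : ℂ) else 0) := by
        exact Finset.prod_congr rfl fun i _ ↦ h1 (c i)
    _ = if c = 0 then ((N : ℂ) ^ d) else 0 := by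
        by_cases hc : c = 0
        · simp [hc]
        · rw [if_neg hc]
          obtain ⟨i, hi⟩ := Function.ne_iff.mp hc
          exact Finset.prod_eq_zero (Finset.mem_univ i) (if_neg hi)

lemma my_inv {N d : ℕ} [NeZero N] (f : (Fin d → ZMod N) → ℂ) (x : Fin d → ZMod N) :
    ∑ m : Fin d → ZMod N, ft f m * ch x m = f x := by
  have hN0 : (0:ℝ) < (N : ℝ) := by exact_mod_cast Nat.pos_of_ne_zero (NeZero.ne N)
  have hNd : ((N : ℂ) ^ d) ≠ 0 := by
    apply pow_ne_zero
    exact_mod_cast Nat.cast_ne_zero.mpr (NeZero.ne N)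
  simp only [ft, ch, my_hpos, my_hneg]
  simp only [mul_assoc, ← Finset.mul_sum]
  rw [show (∑ m : Fin d → ZMod N, ((∑ y : Fin d → ZMod N,
      (ZMod.stdAddChar (-(∑ i, y i * m i)) : ℂ) * f y) *
      (ZMod.stdAddChar (∑ i, x i * m i) : ℂ)))
      = ∑ y : Fin d → ZMod N, f y *
        ∑ m : Fin d → ZMod N, (ZMod.stdAddChar (∑ i, (x i - y i) * m i) : ℂ) from ?_]
  · rw [Finset.mul_sum]
    rw [Finset.sum_eq_single x]
    · rw [my_orth, if_pos (by funext i; simp)]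
      field_simp
      try ring
    · intro y _ hyx
      rw [my_orth, if_neg, mul_zero, mul_zero]
      intro hc
      apply hyx
      funext i
      have := congrFun hc i
      simp only [Pi.zero_apply, sub_eq_zero] at this
      exact this.symm
    · intro h; exact absurd (Finset.mem_univ x) h
  · simp only [Finset.sum_mul]
    rw [Finset.sum_comm]
    refine Finset.sum_congr rfl fun y _ ↦ ?_
    rw [Finset.mul_sum]
    refine Finset.sum_congr rfl fun m _ ↦ ?_
    rw [show ∑ i, (x i - y i) * m i = (∑ i, x i * m i) + (-(∑ i, y i * m i)) by
      rw [← Finset.sum_neg_distrib, ← Finset.sum_add_distrib]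
      exact Finset.sum_congr rfl fun i _ ↦ by ring]
    rw [AddChar.map_add_eq_mul]
    ring

lemma my_norm_ch {N d : ℕ} [NeZero N] (x m : Fin d → ZMod N) : ‖ch x m‖ = 1 := by
  rw [ch, my_hpos, ZMod.stdAddChar_apply, Circle.norm_coe]

theorem stmt6 {N d γ : ℕ} [NeZero N] (hγ : 1 ≤ γ)
    (f : (Fin d → ZMod N) → ℂ) (hne : f ≠ 0)
    (Sig : Finset (Fin d → ZMod N)) (hSig : ∀ m ∉ Sig, ft f m = 0)
    (p q C : ℝ) (hp : 1 ≤ p) (hpq : p ≤ q)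
    (hres : ∀ g : (Fin d → ZMod N) → ℂ,
      ((Sig.card : ℝ)⁻¹ * ∑ m ∈ Sig, ‖ft g m‖ ^ q) ^ (1 / q)
        ≤ C * ((N : ℝ) ^ d)⁻¹ * (∑ x : Fin d → ZMod N, ‖g x‖ ^ p) ^ (1 / p))
    (A1 : Finset (Fin d → ZMod N))
    (heff : ∑ x : Fin d → ZMod N, ‖f x‖ ^ p ≤ (γ : ℝ) * ∑ x ∈ A1, ‖f x‖ ^ p) :
    (N : ℝ) ^ d / (C * (γ : ℝ) ^ (1 / p)) ≤ ((A1.card : ℝ)) ^ (1 / p) * Sig.card := by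
  have hp0 : (0:ℝ) < p := lt_of_lt_of_le one_pos hp
  have hq1 : (1:ℝ) ≤ q := le_trans hp hpq
  have hq0 : (0:ℝ) < q := lt_of_lt_of_le one_pos hq1
  have hγ1 : (1:ℝ) ≤ (γ:ℝ) := by exact_mod_cast hγ
  have hNd : (0:ℝ) < (N : ℝ) ^ d := by
    have : (0:ℝ) < (N : ℝ) := by exact_mod_cast Nat.pos_of_ne_zero (NeZero.ne N)
    positivity
  set S : ℝ := ∑ x : Fin d → ZMod N, ‖f x‖ ^ p with hS_def
  obtain ⟨x₀, hx₀⟩ := Function.ne_iff.mp hne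
  have hx₀' : (0:ℝ) < ‖f x₀‖ := by simpa [norm_pos_iff] using hx₀
  have hS_pos : 0 < S := by
    refine lt_of_lt_of_le (Real.rpow_pos_of_pos hx₀' p) ?_
    exact Finset.single_le_sum (fun x _ ↦ Real.rpow_nonneg (norm_nonneg _) p)
      (Finset.mem_univ x₀)
  set T : ℝ := ((Sig.card : ℝ)⁻¹ * ∑ m ∈ Sig, ‖ft f m‖ ^ q) ^ (1 / q) with hT_def
  -- Step A
  have hA : ∀ x, ‖f x‖ ≤ ∑ m ∈ Sig, ‖ft f m‖ := by
    intro x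
    have hfx : f x = ∑ m ∈ Sig, ft f m * ch x m := by
      rw [← my_inv f x]
      refine (Finset.sum_subset (Finset.subset_univ Sig) ?_).symm
      intro m _ hm
      rw [hSig m hm, zero_mul]
    calc ‖f x‖ = ‖∑ m ∈ Sig, ft f m * ch x m‖ := by rw [← hfx]
      _ ≤ ∑ m ∈ Sig, ‖ft f m * ch x m‖ := norm_sum_le _ _
      _ = ∑ m ∈ Sig, ‖ft f m‖ := by
          refine Finset.sum_congr rfl fun m _ ↦ ?_
          rw [norm_mul, my_norm_ch, mul_one]
  -- Step B
  have hB : ∑ m ∈ Sig, ‖ft f m‖ ≤ (Sig.card : ℝ) * T := by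
    rcases Finset.eq_empty_or_nonempty Sig with h | h
    · simp [h]
    have hcard : (0:ℝ) < (Sig.card : ℝ) := by
      exact_mod_cast Finset.card_pos.mpr h
    have hmean := Real.arith_mean_le_rpow_mean Sig (fun _ ↦ (Sig.card : ℝ)⁻¹)
      (fun m ↦ ‖ft f m‖) (fun _ _ ↦ by positivity)
      (by rw [Finset.sum_const, nsmul_eq_mul, mul_inv_cancel₀ (ne_of_gt hcard)])
      (fun _ _ ↦ norm_nonneg _) hq1
    rw [← Finset.mul_sum, ← Finset.mul_sum] at hmean
    calc ∑ m ∈ Sig, ‖ft f m‖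
        = (Sig.card : ℝ) * ((Sig.card : ℝ)⁻¹ * ∑ m ∈ Sig, ‖ft f m‖) := by
          field_simp
      _ ≤ (Sig.card : ℝ) * T := mul_le_mul_of_nonneg_left hmean (le_of_lt hcard)
  set K : ℝ := (Sig.card : ℝ) * (C * ((N : ℝ) ^ d)⁻¹ * S ^ (1 / p)) with hK_def
  have hK : ∀ x, ‖f x‖ ≤ K := by
    intro x
    refine le_trans (hA x) (le_trans hB ?_)
    exact mul_le_mul_of_nonneg_left (hres f) (Nat.cast_nonneg _)
  have hK_pos : 0 < K := lt_of_lt_of_le hx₀' (hK x₀)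
  have hcard_pos : (0:ℝ) < (Sig.card : ℝ) := by
    rcases Nat.eq_zero_or_pos Sig.card with h | h
    · exfalso; rw [hK_def, h] at hK_pos; simp at hK_pos
    · exact_mod_cast h
  have hx : (0:ℝ) < ((N : ℝ) ^ d)⁻¹ * S ^ (1 / p) := by
    have := Real.rpow_pos_of_pos hS_pos (1/p)
    positivity
  have hC_pos : (0:ℝ) < C := by
    by_contra hc
    push_neg at hc
    have h3 : C * (((N : ℝ) ^ d)⁻¹ * S ^ (1 / p)) ≤ 0 :=
      mul_nonpos_of_nonpos_of_nonneg hc (le_of_lt hx)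
    have h4 : C * ((N : ℝ) ^ d)⁻¹ * S ^ (1 / p) ≤ 0 := by rw [mul_assoc]; exact h3
    have h5 : K ≤ 0 := by
      rw [hK_def]
      exact mul_nonpos_of_nonneg_of_nonpos (le_of_lt hcard_pos) h4
    linarith
  set B : ℝ := (Sig.card : ℝ) * C * ((N : ℝ) ^ d)⁻¹ with hB_def
  have hB_pos : 0 < B := by positivity
  have hKp : K ^ p = B ^ p * S := by
    rw [hK_def, hB_def,
      show (Sig.card : ℝ) * (C * ((N : ℝ) ^ d)⁻¹ * S ^ (1/p))
        = ((Sig.card : ℝ) * C * ((N : ℝ) ^ d)⁻¹) * S ^ (1/p) by ring,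
      Real.mul_rpow (by positivity) (Real.rpow_nonneg (le_of_lt hS_pos) _),
      ← Real.rpow_mul (le_of_lt hS_pos), one_div_mul_cancel (ne_of_gt hp0), Real.rpow_one]
  have hfinal : S ≤ ((γ:ℝ) * (A1.card : ℝ) * B ^ p) * S := by
    calc S ≤ (γ:ℝ) * ∑ x ∈ A1, ‖f x‖ ^ p := heff
      _ ≤ (γ:ℝ) * ∑ _x ∈ A1, K ^ p := by
          have hsum : ∑ x ∈ A1, ‖f x‖ ^ p ≤ ∑ _x ∈ A1, K ^ p :=
            Finset.sum_le_sum fun x _ ↦ Real.rpow_le_rpow (norm_nonneg _) (hK x) (le_of_lt hp0)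
          exact mul_le_mul_of_nonneg_left hsum (by linarith)
      _ = (γ:ℝ) * ((A1.card : ℝ) * K ^ p) := by
          rw [Finset.sum_const, nsmul_eq_mul]
      _ = ((γ:ℝ) * (A1.card : ℝ) * B ^ p) * S := by rw [hKp]; ring
  have h1 : (1:ℝ) ≤ (γ:ℝ) * (A1.card : ℝ) * B ^ p := by
    have := (mul_le_mul_iff_left₀ hS_pos).mp (by linarith : 1 * S ≤ ((γ:ℝ) * (A1.card : ℝ) * B ^ p) * S)
    linarith
  have h2 : (1:ℝ) ≤ (γ:ℝ) ^ (1/p) * (A1.card : ℝ) ^ (1/p) * B := by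
    have hstep : (1:ℝ) ≤ ((γ:ℝ) * (A1.card : ℝ) * B ^ p) ^ (1/p) := by
      calc (1:ℝ) = (1:ℝ) ^ (1/p) := (Real.one_rpow _).symm
        _ ≤ _ := Real.rpow_le_rpow zero_le_one h1 (by positivity)
    rwa [Real.mul_rpow (by positivity) (Real.rpow_nonneg (le_of_lt hB_pos) _),
      Real.mul_rpow (by positivity) (Nat.cast_nonneg _),
      ← Real.rpow_mul (le_of_lt hB_pos), mul_one_div_cancel (ne_of_gt hp0),
      Real.rpow_one] at hstep
  have hγp : (0:ℝ) < (γ:ℝ) ^ (1/p) := Real.rpow_pos_of_pos (by linarith) _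
  rw [div_le_iff₀ (by positivity)]
  calc (N:ℝ) ^ d = (N:ℝ) ^ d * 1 := (mul_one _).symm
    _ ≤ (N:ℝ) ^ d * ((γ:ℝ) ^ (1/p) * (A1.card : ℝ) ^ (1/p) * B) :=
        mul_le_mul_of_nonneg_left h2 (le_of_lt hNd)
    _ = (A1.card : ℝ) ^ (1/p) * Sig.card * (C * (γ:ℝ) ^ (1/p)) := by
        rw [hB_def]; field_simp
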